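/- arXiv:2311.01026 — 2 statements merged into one kernel-verified Lean document; each statement's English description precedes it below -/
import Mathlib

section
/- Let G be a directed graph with nonnegative integer vertex weights ω and let W ⊆ V. For each i ≥ 0 let L_i = { v : i ≥ d_ω(W,v) > i − ω(v) }. If U ⊆ V satisfies d_ω(W,U) > m, then for each 0 ≤ i ≤ m, U ∩ L_i = ∅ and no vertex of U is reachable from W in G \ L_i. -/
variable {V : Type*}

/-- `l` is a (nonempty) directed closed walk in the digraph with arc relation `E`:
consecutive vertices (cyclically) are joined by arcs. -/
def IsClosedWalk (E : V → V → Prop) (l : List V) : Prop :=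
  l ≠ [] ∧ ∀ i : Fin l.length,
    E (l.get i)
      (l.get ⟨((i : ℕ) + 1) % l.length,
        Nat.mod_lt _ (Nat.lt_of_le_of_lt (Nat.zero_le _) i.isLt)⟩)

/-- A directed cycle: a closed walk with pairwise distinct vertices. -/
def IsDicycle (E : V → V → Prop) (l : List V) : Prop :=
  IsClosedWalk E l ∧ l.Nodup

/-- A (simple) directed path, given as its nonempty list of distinct vertices. -/
def IsPathList (E : V → V → Prop) (l : List V) : Prop :=
  l ≠ [] ∧ l.Chain' E ∧ l.Nodup

/-- The weighted length of a path: the sum of the weights of all its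
vertices except the last one. -/
def pathWeight (ω : V → ℕ) (l : List V) : ℕ :=
  (l.dropLast.map ω).sum

/-- Weighted distance from a set `W` to a vertex `v`: the minimum, over directed
paths from some vertex of `W` to `v`, of the path's weight (vertices of the path
except `v` itself); `∞` if `v` is unreachable from `W`. -/
noncomputable def weightedDist (E : V → V → Prop) (ω : V → ℕ) (W : Set V) (v : V) : ℕ∞ :=
  sInf {n : ℕ∞ | ∃ l : List V, IsPathList E l ∧ (∃ u ∈ W, l.head? = some u) ∧
    l.getLast? = some v ∧ n = (pathWeight ω l : ℕ∞)}

/-- The `i`-th layer from `W`: vertices `v` with `i ≥ d_ω(W,v) > i - ω(v)`. -/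
noncomputable def layer (E : V → V → Prop) (ω : V → ℕ) (W : Set V) (i : ℕ) : Set V :=
  {v | weightedDist E ω W v ≤ (i : ℕ∞) ∧ (i : ℕ∞) < weightedDist E ω W v + (ω v : ℕ∞)}

lemma dist_le_of_mem_path (E : V → V → Prop) (ω : V → ℕ) (W : Set V) {l : List V} {b : V}
    (hl : IsPathList E l) (hW : ∃ u ∈ W, l.head? = some u) (hb : b ∈ l) :
    weightedDist E ω W b ≤ (pathWeight ω l : ℕ∞) := by
  obtain ⟨⟨k, hk⟩, hget⟩ := List.mem_iff_get.mp hb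
  refine le_trans (b := (pathWeight ω (l.take (k+1)) : ℕ∞)) (sInf_le ?_) ?_
  · refine ⟨l.take (k+1), ⟨?_, hl.2.1.take _, hl.2.2.sublist (List.take_sublist _ _)⟩, ?_, ?_, rfl⟩
    · cases l with
      | nil => simp at hk
      | cons a t => simp
    · obtain ⟨u, hu, hhead⟩ := hW
      refine ⟨u, hu, ?_⟩
      cases l with
      | nil => simp at hk
      | cons a t => simpa using hhead
    · rw [List.getLast?_eq_getElem?]
      have hlen : (l.take (k+1)).length = k + 1 := by
        simp [Nat.min_eq_left (Nat.succ_le_of_lt hk)]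
      rw [hlen]
      simp only [Nat.add_sub_cancel]
      rw [List.getElem?_take_of_lt (Nat.lt_succ_self k)]
      rw [List.getElem?_eq_getElem hk]
      simp [← hget, List.get_eq_getElem]
  · norm_cast
    unfold pathWeight
    have h1 : (l.take (k+1)).dropLast = l.take k := by
      rw [List.dropLast_eq_take]
      have hlen : (l.take (k+1)).length = k + 1 := by
        simp [Nat.min_eq_left (Nat.succ_le_of_lt hk)]
      rw [hlen, Nat.add_sub_cancel, List.take_take, Nat.min_eq_left (Nat.le_succ k)]
    rw [h1]
    have h2 : l.take k = (l.dropLast).take k := by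
      rw [List.dropLast_eq_take, List.take_take, Nat.min_eq_left (Nat.le_sub_one_of_lt hk)]
    rw [h2]
    simp only [List.map_take]
    nth_rewrite 2 [← List.take_append_drop k (List.map ω l.dropLast)]
    rw [List.sum_append]
    exact Nat.le_add_right _ _

lemma dist_le_zero_of_mem (E : V → V → Prop) (ω : V → ℕ) (W : Set V) {w : V} (hw : w ∈ W) :
    weightedDist E ω W w ≤ 0 := by
  refine sInf_le ⟨[w], ⟨by simp, List.isChain_singleton w, by simp⟩, ⟨w, hw, rfl⟩, rfl, ?_⟩
  simp [pathWeight]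

lemma wdist_triangle (E : V → V → Prop) (ω : V → ℕ) (W : Set V) {a b : V} (hE : E a b) :
    weightedDist E ω W b ≤ weightedDist E ω W a + (ω a : ℕ∞) := by
  by_cases h : weightedDist E ω W a = ⊤
  · simp [h]
  · have hne : {n : ℕ∞ | ∃ l : List V, IsPathList E l ∧ (∃ u ∈ W, l.head? = some u) ∧
        l.getLast? = some a ∧ n = (pathWeight ω l : ℕ∞)}.Nonempty := by
      by_contra hc
      rw [Set.not_nonempty_iff_eq_empty] at hc
      exact h (by rw [weightedDist, hc, sInf_empty])
    have hmem := csInf_mem hne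
    obtain ⟨l, hl, hW, hlast, heq⟩ := hmem
    have hda : weightedDist E ω W a = (pathWeight ω l : ℕ∞) := heq
    by_cases hb : b ∈ l
    · calc weightedDist E ω W b ≤ (pathWeight ω l : ℕ∞) :=
            dist_le_of_mem_path E ω W hl hW hb
        _ ≤ _ := by rw [hda]; exact le_self_add
    · have hlne : l ≠ [] := hl.1
      have hga : l.getLast hlne = a := by
        rw [List.getLast?_eq_getLast hlne] at hlast
        exact Option.some_injective _ hlast
      have hchain : (l ++ [b]).Chain' E := by
        show List.IsChain E (l ++ [b])
        rw [List.isChain_append]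
        refine ⟨hl.2.1, by simp, ?_⟩
        intro x hx y hy
        rw [hlast] at hx
        simp at hx hy
        subst hx; subst hy; exact hE
      have hsum : pathWeight ω (l ++ [b]) = pathWeight ω l + ω a := by
        unfold pathWeight
        rw [List.dropLast_append_of_ne_nil (l := [b]) (by simp)]
        simp only [List.dropLast_singleton, List.append_nil]
        conv_lhs => rw [← List.dropLast_append_getLast hlne]
        simp [hga]
      refine le_trans (b := (pathWeight ω (l ++ [b]) : ℕ∞)) (sInf_le ?_) ?_
      · exact ⟨l ++ [b], ⟨by simp, hchain, by
            rw [List.nodup_append]; exact ⟨hl.2.2, by simp, by simpa using fun x hx (h : x = b) => hb (h ▸ hx)⟩⟩,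
          by obtain ⟨u, hu, hh⟩ := hW; exact ⟨u, hu, by
            cases l with | nil => exact absurd rfl hlne | cons c t => simpa using hh⟩,
          by simp, rfl⟩
      · rw [hsum, hda]; push_cast; rfl

/-- If `d_ω(W,U) > m`, then for each `0 ≤ i ≤ m` the layer `L_i` is disjoint from `U`,
and no vertex of `U` is reachable from `W` in the graph with the layer `L_i` removed. -/
theorem layer_separates {V : Type*} [Fintype V] (E : V → V → Prop)
    (ω : V → ℕ) (W : Set V) (U : Set V) (m : ℕ)
    (hfar : ∀ u ∈ U, (m : ℕ∞) < weightedDist E ω W u) :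
    ∀ i ≤ m, U ∩ layer E ω W i = ∅ ∧
      ∀ w ∈ W \ layer E ω W i, ∀ u ∈ U,
        ¬ Relation.ReflTransGen
            (fun a b => E a b ∧ a ∉ layer E ω W i ∧ b ∉ layer E ω W i) w u := by
  intro i hi
  constructor
  · ext u
    simp only [Set.mem_inter_iff, Set.mem_empty_iff_false, iff_false, not_and]
    intro hu hl
    have h1 := hfar u hu
    have h2 := hl.1
    exact absurd (le_trans h2 (by exact_mod_cast Nat.cast_le.mpr hi)) (not_le.mpr h1)
  · intro w hw u hu hrel
    have key : weightedDist E ω W u ≤ (i : ℕ∞) := by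
      clear hu
      induction hrel with
      | refl => exact le_trans (dist_le_zero_of_mem E ω W hw.1) (by simp)
      | tail _ hstep ih =>
        rename_i a b _
        obtain ⟨hab, haL, _⟩ := hstep
        have haw : weightedDist E ω W a + (ω a : ℕ∞) ≤ (i : ℕ∞) := by
          by_contra hc
          exact haL ⟨ih, not_le.mp hc⟩
        exact le_trans (wdist_triangle E ω W hab) haw
    have := hfar u hu
    have h2 : weightedDist E ω W u ≤ (m : ℕ∞) :=
      le_trans key (by exact_mod_cast Nat.cast_le.mpr hi)
    exact absurd h2 (not_le.mpr this)
end

section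
/- Let G be a directed graph, let x be a feasible rational solution to the DFVS LP (x ≥ 0 and x(C) ≥ 1 for every directed cycle C), and let N be a positive integer with N·x integral. Let C¹ = v_1 v_2 … v_{l'} be a directed cycle with Σ_{v∈C¹} x_v = 1. Then for any two vertices v_i, v_j on C¹, the weighted distance d_ω(v_i, v_j) in G (with weights ω = N·x) equals the weight of the directed path along C¹ from v_i to v_j. -/
variable {V : Type*}

/-!
Walking along the cycle from `v_i` to `v_j` gives a path of the claimed weight. Conversely, a
path `P` from `v_i` to `v_j` followed by the arc of `C¹` from `v_j` back to `v_i` is a closed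
walk. Every closed walk contains a directed cycle as a sublist, so by feasibility it weighs at
least `N`. As the two arcs of `C¹` together weigh `N`, `P` weighs at least the forward arc.
-/

theorem List.exists_cons_append_singleton_infix_of_not_nodup {α : Type*} {l : List α}
    (h : ¬l.Nodup) : ∃ a t, a :: t ++ [a] <:+: l := by
  induction l with
  | nil => simp at h
  | cons b l ih =>
    by_cases hb : b ∈ l
    · obtain ⟨t, u, rfl⟩ := List.append_of_mem hb
      exact ⟨b, t, ⟨[], u, by simp⟩⟩
    · obtain ⟨a, t, hat⟩ := ih (by simpa [hb] using h)
      exact ⟨a, t, List.infix_cons hat⟩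

section ClosedWalk

variable {E : V → V → Prop}

theorem isClosedWalk_iff_isChain_append {l : List V} {a : V} (ha : l.head? = some a) :
    IsClosedWalk E l ↔ (l ++ [a]).IsChain E := by
  have hne : l ≠ [] := by rintro rfl; simp at ha
  have hpos : 0 < l.length := List.length_pos_iff.2 hne
  have h0 : l[0] = a := by simpa [List.head?_eq_getElem?, hpos] using ha
  simp only [IsClosedWalk, List.isChain_iff_getElem, List.length_append, List.length_singleton,
    Nat.add_lt_add_iff_right, Fin.forall_iff, List.get_eq_getElem, ne_eq, hne,
    not_false_eq_true, true_and]
  refine forall_congr' fun i => forall_congr' fun hi => ?_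
  rw [List.getElem_append_left hi]
  rcases (Nat.succ_le_of_lt hi).eq_or_lt with hlast | hlt
  · simp [← hlast, h0]
  · rw [List.getElem_append_left hlt]
    simp [Nat.mod_eq_of_lt hlt]

theorem IsClosedWalk.exists_isDicycle_sublist {l : List V} (hl : IsClosedWalk E l) :
    ∃ C, C.Sublist l ∧ IsDicycle E C := by
  by_cases hnd : l.Nodup
  · exact ⟨l, .refl l, hl, hnd⟩
  obtain ⟨a, t, hinfix⟩ := List.exists_cons_append_singleton_infix_of_not_nodup hnd
  obtain ⟨b, hb⟩ : ∃ b, l.head? = some b := Option.ne_none_iff_exists'.mp (by simpa using hl.1)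
  have hwalk : IsClosedWalk E (a :: t) :=
    (isClosedWalk_iff_isChain_append rfl).2 <|
      ((isClosedWalk_iff_isChain_append hb).1 hl).infix
        (hinfix.trans (List.prefix_append l [b]).isInfix)
  have hsub : (a :: t).Sublist l := (List.sublist_append_left _ _).trans hinfix.sublist
  have hlen : (a :: t).length < l.length := by
    have := hinfix.length_le
    simp only [List.length_append, List.length_cons] at this ⊢
    omega
  obtain ⟨C, hC, hCcyc⟩ := hwalk.exists_isDicycle_sublist
  exact ⟨C, hC.trans hsub, hCcyc⟩
termination_by l.length

theorem le_sum_map_of_isClosedWalk {x : V → ℚ}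
    (hfeas : ∀ l : List V, IsDicycle E l → 1 ≤ (l.map x).sum) {N : ℕ} {ω : V → ℕ}
    (hω : ∀ v, (ω v : ℚ) = (N : ℚ) * x v) {l : List V} (hl : IsClosedWalk E l) :
    N ≤ (l.map ω).sum := by
  obtain ⟨C, hCl, hC⟩ := hl.exists_isDicycle_sublist
  have hCω : ((C.map ω).sum : ℚ) = N * (C.map x).sum := by
    rw [Nat.cast_list_sum, List.map_map, ← List.sum_map_mul_left]
    exact congrArg List.sum (List.map_congr_left fun v _ => hω v)
  have hNC : (N : ℚ) ≤ (C.map ω).sum := calc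
    (N : ℚ) = N * 1 := (mul_one _).symm
    _ ≤ N * (C.map x).sum := by gcongr; exact hfeas C hC
    _ = (C.map ω).sum := hCω.symm
  exact (Nat.cast_le.1 hNC).trans ((hCl.map ω).sum_le_sum fun _ _ => Nat.zero_le _)

end ClosedWalk

section WeightedDist

variable {E : V → V → Prop} {ω : V → ℕ} {W : Set V} {v : V}

theorem weightedDist_le_pathWeight {l : List V} {u : V} (hl : IsPathList E l) (hu : u ∈ W)
    (hhead : l.head? = some u) (hlast : l.getLast? = some v) :
    weightedDist E ω W v ≤ pathWeight ω l :=
  sInf_le ⟨l, hl, ⟨u, hu, hhead⟩, hlast, rfl⟩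

theorem le_weightedDist {k : ℕ}
    (h : ∀ l, IsPathList E l → ∀ u ∈ W, l.head? = some u → l.getLast? = some v →
      k ≤ pathWeight ω l) :
    (k : ℕ∞) ≤ weightedDist E ω W v := by
  refine le_sInf ?_
  rintro _ ⟨l, hl, ⟨u, hu, hhead⟩, hlast, rfl⟩
  exact Nat.cast_le.2 (h l hl u hu hhead hlast)

end WeightedDist

theorem ZMod.sum_range_add_natCast {n : ℕ} [NeZero n] {M : Type*} [AddCommMonoid M]
    (f : ZMod n → M) (i : ZMod n) : ∑ t ∈ Finset.range n, f (i + t) = ∑ k, f k :=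
  Finset.sum_nbij' (fun t => i + t) (fun k => (k - i).val)
    (fun _ _ => Finset.mem_univ _) (fun k _ => Finset.mem_range.2 (ZMod.val_lt _))
    (fun t ht => by simp [ZMod.val_cast_of_lt (Finset.mem_range.1 ht)])
    (fun k _ => by simp) (fun _ _ => rfl)

theorem ZMod.sum_range_val_sub_add_sum_range_val_sub {n : ℕ} [NeZero n] {M : Type*}
    [AddCommMonoid M] (f : ZMod n → M) {i j : ZMod n} (hij : i ≠ j) :
    ∑ t ∈ Finset.range (j - i).val, f (i + t) + ∑ t ∈ Finset.range (i - j).val, f (j + t)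
      = ∑ k, f k := by
  have hlen : (j - i).val + (i - j).val = n := by
    have hneg := ZMod.neg_val (j - i)
    rw [neg_sub, if_neg (sub_ne_zero.2 hij.symm)] at hneg
    have := ZMod.val_lt (j - i)
    omega
  have hsplit := Finset.sum_range_add (fun t => f (i + t)) (j - i).val (i - j).val
  rw [hlen, ZMod.sum_range_add_natCast f i] at hsplit
  rw [hsplit]
  congr 1
  refine Finset.sum_congr rfl fun t _ => ?_
  rw [Nat.cast_add, ZMod.natCast_zmod_val, ← add_assoc, add_sub_cancel]

section Cycle

variable {n : ℕ} (c : ZMod n → V)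

def cycleArc (i : ZMod n) (m : ℕ) : List V :=
  (List.range m).map fun t : ℕ => c (i + t)

theorem sum_map_cycleArc (ω : V → ℕ) (i : ZMod n) (m : ℕ) :
    ((cycleArc c i m).map ω).sum = ∑ t ∈ Finset.range m, ω (c (i + t)) := by
  simp [cycleArc, Finset.sum, Finset.range, Multiset.range, Function.comp_def]

theorem cycleArc_succ (i : ZMod n) (m : ℕ) :
    cycleArc c i (m + 1) = cycleArc c i m ++ [c (i + m)] := by
  simp [cycleArc, List.range_succ]

theorem head?_cycleArc (i : ZMod n) {m : ℕ} (hm : 0 < m) :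
    (cycleArc c i m).head? = some (c i) := by
  obtain ⟨m, rfl⟩ := Nat.exists_eq_add_of_lt hm
  simp [cycleArc, List.range_succ_eq_map]

theorem pathWeight_cycleArc_succ (ω : V → ℕ) (i : ZMod n) (m : ℕ) :
    pathWeight ω (cycleArc c i (m + 1)) = ∑ t ∈ Finset.range m, ω (c (i + t)) := by
  rw [pathWeight, cycleArc_succ, List.dropLast_concat, sum_map_cycleArc]

variable {c}

theorem isChain_cycleArc {E : V → V → Prop} (hadj : ∀ k, E (c k) (c (k + 1)))
    (i : ZMod n) (m : ℕ) : (cycleArc c i m).IsChain E := by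
  refine List.isChain_iff_getElem.2 fun t ht => ?_
  simpa [cycleArc, add_assoc] using hadj (i + t)

theorem nodup_cycleArc [NeZero n] (hinj : Function.Injective c) (i : ZMod n) {m : ℕ}
    (hm : m ≤ n) : (cycleArc c i m).Nodup := by
  refine List.nodup_range.map_on fun s hs t ht hst => ?_
  have hst' : (s : ZMod n) = t := add_left_cancel (hinj hst)
  rw [List.mem_range] at hs ht
  simpa [ZMod.val_cast_of_lt (hs.trans_le hm), ZMod.val_cast_of_lt (ht.trans_le hm)] using
    congrArg ZMod.val hst'

end Cycle

theorem sum_cycleArc_le_pathWeight {n : ℕ} [NeZero n] {E : V → V → Prop} {x : V → ℚ}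
    (hfeas : ∀ l : List V, IsDicycle E l → 1 ≤ (l.map x).sum) {N : ℕ} {ω : V → ℕ}
    (hω : ∀ v, (ω v : ℚ) = (N : ℚ) * x v) {c : ZMod n → V} (hadj : ∀ k, E (c k) (c (k + 1)))
    (htot : ∑ k, ω (c k) = N) {i j : ZMod n} {l : List V} (hl : l.IsChain E)
    (hhead : l.head? = some (c i)) (hlast : l.getLast? = some (c j)) :
    ∑ t ∈ Finset.range (j - i).val, ω (c (i + t)) ≤ pathWeight ω l := by
  rcases eq_or_ne i j with rfl | hij
  · simp
  have hr : 0 < (i - j).val := ZMod.val_pos.2 (sub_ne_zero.2 hij)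
  have hreturn : (cycleArc c j (i - j).val ++ [c i]).IsChain E := by
    have := isChain_cycleArc hadj j ((i - j).val + 1)
    rwa [cycleArc_succ, ZMod.natCast_zmod_val, add_sub_cancel] at this
  obtain ⟨t, rfl⟩ := List.head?_eq_some_iff.1 hhead
  have hwalk : IsClosedWalk E (cycleArc c j (i - j).val ++ (c i :: t).dropLast) := by
    rw [isClosedWalk_iff_isChain_append (a := c j)
        (by simp [List.head?_append, head?_cycleArc c j hr]), List.append_assoc,
      List.dropLast_append_getLast? _ hlast, ← List.singleton_append, ← List.append_assoc]
    exact hreturn.append_overlap hl (List.cons_ne_nil _ _)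
  have hclosed := le_sum_map_of_isClosedWalk hfeas hω hwalk
  rw [List.map_append, List.sum_append, sum_map_cycleArc] at hclosed
  have hsplit := ZMod.sum_range_val_sub_add_sum_range_val_sub (ω ∘ c) hij
  simp only [Function.comp_apply, htot] at hsplit
  rw [pathWeight]
  omega

theorem dist_eq_cycle_weight_general {V : Type*} (E : V → V → Prop)
    (x : V → ℚ)
    (hfeas : ∀ l : List V, IsDicycle E l → 1 ≤ (l.map x).sum)
    (N : ℕ) (ω : V → ℕ) (hω : ∀ v, (ω v : ℚ) = (N : ℚ) * x v)
    (n : ℕ) [NeZero n] (c : ZMod n → V) (hinj : Function.Injective c)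
    (hadj : ∀ k : ZMod n, E (c k) (c (k + 1)))
    (hsum : ∑ k : ZMod n, x (c k) = 1) :
    ∀ i j : ZMod n,
      weightedDist E ω {c i} (c j)
        = ((∑ t ∈ Finset.range ((j - i).val), ω (c (i + (t : ZMod n))) : ℕ) : ℕ∞) := by
  intro i j
  have htot : ∑ k, ω (c k) = N := by
    have : ((∑ k, ω (c k) : ℕ) : ℚ) = N := by
      push_cast
      simp only [hω, ← Finset.mul_sum, hsum, mul_one]
    exact_mod_cast this
  have harc : IsPathList E (cycleArc c i ((j - i).val + 1)) :=
    ⟨by simp [cycleArc], isChain_cycleArc hadj _ _, nodup_cycleArc hinj _ (ZMod.val_lt _)⟩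
  refine le_antisymm ?_ (le_weightedDist fun l hl u hu hhead hlast => ?_)
  · rw [← pathWeight_cycleArc_succ]
    refine weightedDist_le_pathWeight harc rfl (head?_cycleArc c i (Nat.succ_pos _)) ?_
    rw [cycleArc_succ, List.getLast?_concat, ZMod.natCast_zmod_val, add_sub_cancel]
  · rw [Set.mem_singleton_iff.1 hu] at hhead
    exact sum_cycleArc_le_pathWeight hfeas hω hadj htot hl.2.1 hhead hlast

/-- Let `x` be a feasible rational solution to the DFVS LP and `N > 0` with
`ω = N·x` integral.  If `C¹ = v_1 … v_{l'}` is a directed cycle with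
`Σ_{v ∈ C¹} x_v = 1`, then for any two vertices `v_i, v_j` of `C¹` the weighted
distance `d_ω(v_i, v_j)` in `G` equals the weight of the directed subpath of
`C¹` from `v_i` to `v_j`. -/
theorem dist_eq_cycle_weight {V : Type*} [Fintype V] (E : V → V → Prop)
    (x : V → ℚ) (hx0 : ∀ v, 0 ≤ x v)
    (hfeas : ∀ l : List V, IsDicycle E l → 1 ≤ (l.map x).sum)
    (N : ℕ) (hN : 0 < N) (ω : V → ℕ) (hω : ∀ v, (ω v : ℚ) = (N : ℚ) * x v)
    (n : ℕ) [NeZero n] (c : ZMod n → V) (hinj : Function.Injective c)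
    (hadj : ∀ k : ZMod n, E (c k) (c (k + 1)))
    (hsum : ∑ k : ZMod n, x (c k) = 1) :
    ∀ i j : ZMod n,
      weightedDist E ω {c i} (c j)
        = ((∑ t ∈ Finset.range ((j - i).val), ω (c (i + (t : ZMod n))) : ℕ) : ℕ∞) :=
  dist_eq_cycle_weight_general E x hfeas N ω hω n c hinj hadj hsum
end
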